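/- With R as above (the 'paramodular order' of level pⁿ in M₄(ℚ_p)), the unique way of writing R as an intersection of two maximal orders is R = hⁿM₄(ℤ_p)h^{−n} ∩ W⁻¹hⁿM₄(ℤ_p)h^{−n}W, where h = diag(1,1,1,p) and W = W_{pⁿ} is the Atkin-Lehner matrix [[0,pⁿ,0,0],[1,0,0,0],[0,0,0,1],[0,0,pⁿ,0]]. -/

import Mathlib

open scoped Matrix

variable (p : ℕ) [Fact p.Prime] (n : ℕ)

/-- Exponent pattern of the paramodular order of level `pⁿ`. -/
def paraExp (i j : Fin 4) : ℤ :=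
  if (i = 0 ∧ j = 1) ∨ (i = 2 ∧ j = 1) ∨ (i = 3 ∧ j = 0) ∨ (i = 3 ∧ j = 1) ∨
      (i = 3 ∧ j = 2) then (n : ℤ)
  else if i = 1 ∧ j = 3 then -(n : ℤ)
  else 0

/-- The paramodular order `R` of level `pⁿ` in `M₄(ℚ_p)`, as a set. -/
def paraOrder : Set (Matrix (Fin 4) (Fin 4) ℚ_[p]) :=
  {m | ∀ i j : Fin 4, ‖m i j‖ ≤ (p : ℝ) ^ (-(paraExp n i j))}

/-- `M₄(ℤ_p)` inside `M₄(ℚ_p)`, as a set. -/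
def intMat : Set (Matrix (Fin 4) (Fin 4) ℚ_[p]) :=
  {x | ∀ i j : Fin 4, ‖x i j‖ ≤ 1}

/-- An order in `M₄(ℚ_p)`. -/
def IsOrder (O : Subring (Matrix (Fin 4) (Fin 4) ℚ_[p])) : Prop :=
  (∀ (c : ℤ_[p]) (x : Matrix (Fin 4) (Fin 4) ℚ_[p]), x ∈ O → c • x ∈ O)
  ∧ (∃ S : Finset (Matrix (Fin 4) (Fin 4) ℚ_[p]), (∀ x ∈ S, x ∈ O) ∧
      ∀ x ∈ O, x ∈ Submodule.span ℤ_[p] (↑S : Set (Matrix (Fin 4) (Fin 4) ℚ_[p])))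
  ∧ Submodule.span ℚ_[p] (↑O : Set (Matrix (Fin 4) (Fin 4) ℚ_[p])) = ⊤

/-- A maximal order in `M₄(ℚ_p)`. -/
def IsMaximalOrder (O : Subring (Matrix (Fin 4) (Fin 4) ℚ_[p])) : Prop :=
  IsOrder p O ∧ ∀ O' : Subring (Matrix (Fin 4) (Fin 4) ℚ_[p]),
    IsOrder p O' → O ≤ O' → O' = O

/-- `h = diag(1,1,1,p)`. -/
noncomputable def hMat : Matrix (Fin 4) (Fin 4) ℚ_[p] :=
  Matrix.diagonal ![1, 1, 1, (p : ℚ_[p])]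

/-- The Atkin-Lehner matrix `W_{pⁿ}`. -/
noncomputable def WMat : Matrix (Fin 4) (Fin 4) ℚ_[p] :=
  !![0, (p : ℚ_[p])^n, 0, 0; 1, 0, 0, 0; 0, 0, 0, 1; 0, 0, (p : ℚ_[p])^n, 0]

/-- The maximal order `hⁿ M₄(ℤ_p) h^{−n}`. -/
noncomputable def Omax1 : Set (Matrix (Fin 4) (Fin 4) ℚ_[p]) :=
  (fun x => (hMat p)^n * x * ((hMat p)^n)⁻¹) '' intMat p

/-- The maximal order `W⁻¹ hⁿ M₄(ℤ_p) h^{−n} W`. -/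
noncomputable def Omax2 : Set (Matrix (Fin 4) (Fin 4) ℚ_[p]) :=
  (fun x => (WMat p n)⁻¹ * ((hMat p)^n * x * ((hMat p)^n)⁻¹) * WMat p n) '' intMat p


/-! An order containing the diagonal idempotents `eᵢᵢ` is cut out entrywise,
`{m | ‖m i j‖ ≤ p ^ (-v i j)}`, and `v i k ≤ v i j + v j k` because it is a ring. So
`v i j ≥ v i 0 - v j 0`, and by maximality a maximal order containing `R` is the conjugate
`diag(p ^ b) M₄(ℤ_p) diag(p ^ b)⁻¹` with `b i = v i 0`; containing `R` forces
`b = (0, -m, 0, n - m)` up to a shift, with `0 ≤ m ≤ n`. Intersecting such lattices takes entrywise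
maxima of exponents, and at the entries `(0, 1)`, `(1, 0)` of `R` this forces `{m, m'} = {0, n}`;
`m = 0` and `m = n` are `hⁿM₄(ℤ_p)h⁻ⁿ` and its `W`-conjugate. -/

open Matrix

section ExpLattice

variable {p} {ι : Type*}

lemma one_lt_natCast_prime : (1 : ℝ) < p := by
  exact_mod_cast (Fact.out : p.Prime).one_lt

lemma natCast_prime_pos : (0 : ℝ) < p :=
  zero_lt_one.trans one_lt_natCast_prime

lemma zpow_prime_le_zpow_prime_iff {a b : ℤ} : (p : ℝ) ^ a ≤ (p : ℝ) ^ b ↔ a ≤ b :=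
  zpow_le_zpow_iff_right₀ one_lt_natCast_prime

lemma zpow_prime_mul_zpow_prime (a b : ℤ) : (p : ℝ) ^ a * (p : ℝ) ^ b = (p : ℝ) ^ (a + b) :=
  (zpow_add₀ natCast_prime_pos.ne' a b).symm

lemma padic_prime_ne_zero : (p : ℚ_[p]) ≠ 0 := by
  exact_mod_cast (Fact.out : p.Prime).ne_zero

variable (p) in
def expLattice (a : ι → ι → ℤ) : Set (Matrix ι ι ℚ_[p]) :=
  {m | ∀ i j, ‖m i j‖ ≤ (p : ℝ) ^ (-a i j)}

def diffExp (b : ι → ℤ) : ι → ι → ℤ := fun i j => b i - b j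

lemma expLattice_inter (a b : ι → ι → ℤ) :
    expLattice p a ∩ expLattice p b = expLattice p (a ⊔ b) := by
  have hmono : Monotone fun k : ℤ => (p : ℝ) ^ k := zpow_right_mono₀ one_lt_natCast_prime.le
  ext m
  simp only [expLattice, Set.mem_inter_iff, Set.mem_ofPred_eq, Pi.sup_apply, neg_sup,
    hmono.map_min, le_min_iff, forall_and]

lemma zero_mem_expLattice {a : ι → ι → ℤ} : (0 : Matrix ι ι ℚ_[p]) ∈ expLattice p a :=
  fun i j => by rw [Matrix.zero_apply, norm_zero]; positivity

lemma add_mem_expLattice {a : ι → ι → ℤ} {x y : Matrix ι ι ℚ_[p]} (hx : x ∈ expLattice p a)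
    (hy : y ∈ expLattice p a) : x + y ∈ expLattice p a := fun i j =>
  (Padic.nonarchimedean _ _).trans (max_le (hx i j) (hy i j))

lemma smul_mem_expLattice {a : ι → ι → ℤ} (c : ℤ_[p]) {x : Matrix ι ι ℚ_[p]}
    (hx : x ∈ expLattice p a) : c • x ∈ expLattice p a := fun i j => by
  rw [Matrix.smul_apply, Algebra.smul_def, norm_mul]
  exact (mul_le_of_le_one_left (norm_nonneg _) c.2).trans (hx i j)

lemma image_expLattice {f : Matrix ι ι ℚ_[p] → Matrix ι ι ℚ_[p]} (σ : Equiv.Perm ι) (d : ι → ℤ)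
    (hf : ∀ x i j, f x i j = (p : ℚ_[p]) ^ d i * x (σ i) (σ j) * (p : ℚ_[p]) ^ (-d j))
    (a : ι → ι → ℤ) :
    f '' expLattice p a = expLattice p (fun i j => a (σ i) (σ j) + diffExp d i j) := by
  have hp : (p : ℚ_[p]) ≠ 0 := padic_prime_ne_zero
  ext m
  constructor
  · rintro ⟨x, hx, rfl⟩ i j
    rw [hf, norm_mul, norm_mul, Padic.norm_p_zpow, Padic.norm_p_zpow, neg_neg]
    calc (p : ℝ) ^ (-d i) * ‖x (σ i) (σ j)‖ * (p : ℝ) ^ d j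
        ≤ (p : ℝ) ^ (-d i) * (p : ℝ) ^ (-a (σ i) (σ j)) * (p : ℝ) ^ d j := by
          gcongr; exact hx _ _
      _ = _ := by
          rw [zpow_prime_mul_zpow_prime, zpow_prime_mul_zpow_prime]; simp only [diffExp]; ring_nf
  · intro hm
    refine ⟨of fun k l => (p : ℚ_[p]) ^ (-d (σ.symm k)) * m (σ.symm k) (σ.symm l) *
      (p : ℚ_[p]) ^ d (σ.symm l), fun k l => ?_, ?_⟩
    · obtain ⟨i, rfl⟩ := σ.surjective k
      obtain ⟨j, rfl⟩ := σ.surjective l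
      simp only [of_apply, Equiv.symm_apply_apply, norm_mul, Padic.norm_p_zpow, neg_neg]
      calc (p : ℝ) ^ d i * ‖m i j‖ * (p : ℝ) ^ (-d j)
          ≤ (p : ℝ) ^ d i * (p : ℝ) ^ (-(a (σ i) (σ j) + diffExp d i j)) * (p : ℝ) ^ (-d j) := by
            gcongr; exact hm i j
        _ = _ := by
            rw [zpow_prime_mul_zpow_prime, zpow_prime_mul_zpow_prime]; simp only [diffExp]; ring_nf
    · ext i j
      rw [hf]
      simp only [of_apply, Equiv.symm_apply_apply]
      rw [_root_.zpow_neg, _root_.zpow_neg]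
      field_simp

section

variable [Fintype ι]

lemma mul_mem_expLattice {a : ι → ι → ℤ} (ha : ∀ i j k, a i k ≤ a i j + a j k)
    {x y : Matrix ι ι ℚ_[p]} (hx : x ∈ expLattice p a) (hy : y ∈ expLattice p a) :
    x * y ∈ expLattice p a := fun i k => by
  refine IsUltrametricDist.norm_sum_le_of_forall_le_of_nonneg (by positivity) fun j _ => ?_
  calc ‖x i j * y j k‖ ≤ (p : ℝ) ^ (-a i j) * (p : ℝ) ^ (-a j k) := by
        rw [norm_mul]; gcongr; exacts [hx i j, hy j k]
    _ ≤ (p : ℝ) ^ (-a i k) := by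
        rw [zpow_prime_mul_zpow_prime, zpow_prime_le_zpow_prime_iff]; linarith [ha i j k]

end

variable [DecidableEq ι]

lemma single_mem_expLattice {a : ι → ι → ℤ} {i j : ι} {c : ℚ_[p]} :
    single i j c ∈ expLattice p a ↔ ‖c‖ ≤ (p : ℝ) ^ (-a i j) := by
  refine ⟨fun h => by simpa using h i j, fun h k l => ?_⟩
  by_cases hkl : i = k ∧ j = l
  · obtain ⟨rfl, rfl⟩ := hkl
    simpa using h
  · rw [single_apply_of_ne _ _ _ _ _ hkl, norm_zero]
    positivity

lemma single_zpow_mem_expLattice {a : ι → ι → ℤ} {i j : ι} {k : ℤ} :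
    single i j ((p : ℚ_[p]) ^ k) ∈ expLattice p a ↔ a i j ≤ k := by
  rw [single_mem_expLattice, Padic.norm_p_zpow, zpow_prime_le_zpow_prime_iff, neg_le_neg_iff]

lemma single_eq_smul_single_zpow (i j : ι) (c : ℚ_[p]) (k : ℤ) :
    single i j c = (c * (p : ℚ_[p]) ^ (-k)) • single i j ((p : ℚ_[p]) ^ k) := by
  rw [smul_single, smul_eq_mul, mul_assoc, ← zpow_add₀ padic_prime_ne_zero, neg_add_cancel,
    zpow_zero, mul_one]

lemma padicInt_smul_single (u : ℤ_[p]) (i j : ι) (c : ℚ_[p]) :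
    u • single i j c = single i j ((u : ℚ_[p]) * c) := by
  rw [← algebraMap_smul ℚ_[p], smul_single]
  rfl

lemma expLattice_subset_expLattice_iff {a b : ι → ι → ℤ} :
    expLattice p a ⊆ expLattice p b ↔ b ≤ a := by
  refine ⟨fun h i j => ?_, fun h m hm i j => (hm i j).trans ?_⟩
  · exact single_zpow_mem_expLattice.1 (h (single_zpow_mem_expLattice.2 le_rfl))
  · exact zpow_prime_le_zpow_prime_iff.2 (neg_le_neg (h i j))

lemma expLattice_injective : Function.Injective (expLattice (ι := ι) p) := fun _ _ h =>
  le_antisymm (expLattice_subset_expLattice_iff.1 h.ge) (expLattice_subset_expLattice_iff.1 h.le)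

variable [Fintype ι]

lemma le_add_of_mul_mem_expLattice {a : ι → ι → ℤ}
    (hmul : ∀ x ∈ expLattice p a, ∀ y ∈ expLattice p a, x * y ∈ expLattice p a) (i j k : ι) :
    a i k ≤ a i j + a j k := by
  have h := hmul _ (single_zpow_mem_expLattice.2 (le_refl (a i j))) _
    (single_zpow_mem_expLattice.2 (le_refl (a j k)))
  rwa [single_mul_single_same, ← zpow_add₀ padic_prime_ne_zero,
    single_zpow_mem_expLattice] at h

lemma diagonal_zpow_inv (d : ι → ℤ) :
    (diagonal fun i => (p : ℚ_[p]) ^ d i)⁻¹ = diagonal fun i => (p : ℚ_[p]) ^ (-d i) := by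
  refine inv_eq_right_inv ?_
  rw [diagonal_mul_diagonal, ← diagonal_one]
  congr 1
  funext i
  rw [← zpow_add₀ padic_prime_ne_zero, add_neg_cancel, zpow_zero]

lemma image_diagonal_zpow_conj (d : ι → ℤ) (a : ι → ι → ℤ) :
    (fun x => (diagonal fun i => (p : ℚ_[p]) ^ d i) * x *
        (diagonal fun i => (p : ℚ_[p]) ^ d i)⁻¹) '' expLattice p a = expLattice p (a + diffExp d) :=
  image_expLattice 1 d (fun x i j => by rw [diagonal_zpow_inv, mul_diagonal, diagonal_mul]; rfl) a

variable (p) in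
/-- `diagonal (p ^ b) * M(ℤ_p) * (diagonal (p ^ b))⁻¹`, by `image_diagonal_zpow_conj`. -/
def diffExpSubring (b : ι → ℤ) : Subring (Matrix ι ι ℚ_[p]) where
  carrier := expLattice p (diffExp b)
  zero_mem' := zero_mem_expLattice
  one_mem' i j := by
    by_cases h : i = j
    · subst h; simp [diffExp]
    · rw [one_apply_ne h, norm_zero]; positivity
  add_mem' := add_mem_expLattice
  neg_mem' hx i j := by rw [Matrix.neg_apply, norm_neg]; exact hx i j
  mul_mem' := mul_mem_expLattice fun i j k => by simp [diffExp]

lemma coe_diffExpSubring (b : ι → ℤ) :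
    (diffExpSubring p b : Set (Matrix ι ι ℚ_[p])) = expLattice p (diffExp b) := rfl

end ExpLattice

section Orders

variable {p} {O : Subring (Matrix (Fin 4) (Fin 4) ℚ_[p])}

lemma isOrder_diffExpSubring (b : Fin 4 → ℤ) : IsOrder p (diffExpSubring p b) := by
  classical
  set gens : Finset (Matrix (Fin 4) (Fin 4) ℚ_[p]) := Finset.univ.image fun ij : Fin 4 × Fin 4 =>
    single ij.1 ij.2 ((p : ℚ_[p]) ^ diffExp b ij.1 ij.2)
  have hgen (i j : Fin 4) : single i j ((p : ℚ_[p]) ^ diffExp b i j) ∈ gens :=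
    Finset.mem_image_of_mem _ (Finset.mem_univ (i, j))
  refine ⟨fun c x hx => smul_mem_expLattice c hx, ⟨gens, ?_, fun x hx => ?_⟩, ?_⟩
  · simp only [gens, Finset.mem_image]
    rintro _ ⟨ij, -, rfl⟩
    exact single_zpow_mem_expLattice.2 le_rfl
  · rw [matrix_eq_sum_single x]
    refine Submodule.sum_mem _ fun i _ => Submodule.sum_mem _ fun j _ => ?_
    have hc : ‖x i j * (p : ℚ_[p]) ^ (-diffExp b i j)‖ ≤ 1 := by
      rw [norm_mul, Padic.norm_p_zpow, neg_neg]
      calc ‖x i j‖ * (p : ℝ) ^ diffExp b i j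
          ≤ (p : ℝ) ^ (-diffExp b i j) * (p : ℝ) ^ diffExp b i j := by gcongr; exact hx i j
        _ = 1 := by rw [zpow_prime_mul_zpow_prime, neg_add_cancel, zpow_zero]
    have hg : single i j ((p : ℚ_[p]) ^ diffExp b i j) ∈ Submodule.span ℤ_[p] (gens : Set _) :=
      Submodule.subset_span (hgen i j)
    let u : ℤ_[p] := ⟨_, hc⟩
    have hu := Submodule.smul_mem _ u hg
    rwa [padicInt_smul_single, ← smul_eq_mul, ← smul_single,
      ← single_eq_smul_single_zpow] at hu
  · refine eq_top_iff.2 fun x _ => ?_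
    rw [matrix_eq_sum_single x]
    refine Submodule.sum_mem _ fun i _ => Submodule.sum_mem _ fun j _ => ?_
    rw [single_eq_smul_single_zpow i j _ (diffExp b i j)]
    exact Submodule.smul_mem _ _
      (Submodule.subset_span (single_zpow_mem_expLattice.2 le_rfl))

lemma IsOrder.exists_subset_expLattice_const (hO : IsOrder p O) :
    ∃ k : ℤ, (O : Set (Matrix (Fin 4) (Fin 4) ℚ_[p])) ⊆ expLattice p fun _ _ => k := by
  classical
  obtain ⟨S, -, hspan⟩ := hO.2.1
  obtain ⟨C, hC⟩ := ((S ×ˢ (Finset.univ : Finset (Fin 4 × Fin 4))).image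
    fun s : Matrix (Fin 4) (Fin 4) ℚ_[p] × Fin 4 × Fin 4 => ‖s.1 s.2.1 s.2.2‖).exists_le
  obtain ⟨k, hk⟩ := pow_unbounded_of_one_lt C (one_lt_natCast_prime (p := p))
  have hS : ∀ s ∈ S, s ∈ expLattice p fun _ _ => -(k : ℤ) := fun s hs i j => by
    rw [neg_neg, zpow_natCast]
    have hmem : (s, i, j) ∈ S ×ˢ (Finset.univ : Finset (Fin 4 × Fin 4)) :=
      Finset.mem_product.2 ⟨hs, Finset.mem_univ _⟩
    exact (hC _ (Finset.mem_image_of_mem _ hmem)).trans hk.le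
  refine ⟨-k, fun x hx => ?_⟩
  have hxS := hspan x hx
  clear hx
  induction hxS using Submodule.span_induction with
  | mem y hy => exact hS y hy
  | zero => exact zero_mem_expLattice
  | add y z _ _ hy hz => exact add_mem_expLattice hy hz
  | smul c y _ hy => exact smul_mem_expLattice c hy

lemma IsOrder.exists_single_mem_iff (hO : IsOrder p O) {i j : Fin 4} {c₀ : ℚ_[p]} (hc₀ : c₀ ≠ 0)
    (h : single i j c₀ ∈ O) : ∃ v : ℤ, ∀ c, single i j c ∈ O ↔ ‖c‖ ≤ (p : ℝ) ^ (-v) := by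
  classical
  obtain ⟨k, hk⟩ := hO.exists_subset_expLattice_const
  let P : ℤ → Prop := fun w => ∃ c, single i j c ∈ O ∧ ‖c‖ = (p : ℝ) ^ (-w)
  have hbdd : ∀ w, P w → k ≤ w := fun w ⟨c, hc, hcw⟩ => by
    have := single_mem_expLattice.1 (hk hc)
    rwa [hcw, zpow_prime_le_zpow_prime_iff, neg_le_neg_iff] at this
  obtain ⟨v, ⟨c₁, hc₁, hc₁v⟩, hv⟩ := Int.exists_least_of_bdd ⟨k, hbdd⟩
    ⟨_, c₀, h, Padic.norm_eq_zpow_neg_valuation hc₀⟩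
  have hc₁0 : c₁ ≠ 0 := norm_ne_zero_iff.1 (hc₁v ▸ (zpow_pos natCast_prime_pos _).ne')
  refine ⟨v, fun c => ⟨fun hc => ?_, fun hc => ?_⟩⟩
  · rcases eq_or_ne c 0 with rfl | hc0
    · rw [norm_zero]; positivity
    · rw [Padic.norm_eq_zpow_neg_valuation hc0, zpow_prime_le_zpow_prime_iff, neg_le_neg_iff]
      exact hv _ ⟨c, hc, Padic.norm_eq_zpow_neg_valuation hc0⟩
  · -- `c₁` has the least valuation on the line, so `c = (c / c₁) • c₁` with `c / c₁ ∈ ℤ_p`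
    have hu : ‖c / c₁‖ ≤ 1 := by
      rw [norm_div, div_le_one (norm_pos_iff.2 hc₁0), hc₁v]; exact hc
    let u : ℤ_[p] := ⟨c / c₁, hu⟩
    have := hO.1 u _ hc₁
    rwa [padicInt_smul_single, div_mul_cancel₀ _ hc₁0] at this

lemma IsOrder.exists_eq_expLattice (hO : IsOrder p O) (hdiag : ∀ i, single i i 1 ∈ O)
    (hline : ∀ i j, ∃ c ≠ 0, single i j c ∈ O) :
    ∃ v, (O : Set (Matrix (Fin 4) (Fin 4) ℚ_[p])) = expLattice p v := by
  choose v hv using fun i j =>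
    have ⟨_, hc₀, h⟩ := hline i j
    hO.exists_single_mem_iff hc₀ h
  refine ⟨v, Set.ext fun m => ⟨fun hm i j => ?_, fun hm => ?_⟩⟩
  · refine (hv i j _).1 ?_
    simpa using O.mul_mem (O.mul_mem (hdiag i) hm) (hdiag j)
  · rw [SetLike.mem_coe, matrix_eq_sum_single m]
    exact O.sum_mem fun i _ => O.sum_mem fun j _ => (hv i j _).2 (hm i j)

lemma IsMaximalOrder.eq_diffExpSubring (hO : IsMaximalOrder p O) {v : Fin 4 → Fin 4 → ℤ}
    (hv : (O : Set (Matrix (Fin 4) (Fin 4) ℚ_[p])) = expLattice p v) :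
    diffExpSubring p (fun i => v i 0) = O := by
  have htri := le_add_of_mul_mem_expLattice (p := p) (a := v) fun x hx y hy => by
    rw [← hv] at hx hy ⊢; exact O.mul_mem hx hy
  refine hO.2 _ (isOrder_diffExpSubring _) fun x hx => ?_
  have hxv : x ∈ expLattice p v := hv ▸ SetLike.mem_coe.2 hx
  exact expLattice_subset_expLattice_iff.2
    (fun i j => show v i 0 - v j 0 ≤ v i j by linarith [htri i j 0]) hxv

end Orders

section Paramodular

variable {p n} {O : Subring (Matrix (Fin 4) (Fin 4) ℚ_[p])}

/-- `α_m = diag(1, p^m, 1, p^(m-n)) = diagonal (p ^ (-alphaExp n m))`, so that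
`α_m⁻¹ M₄(ℤ_p) α_m = expLattice p (diffExp (alphaExp n m))`. -/
def alphaExp (n : ℕ) (m : ℤ) : Fin 4 → ℤ := ![0, -m, 0, n - m]

lemma paraOrder_eq_expLattice : paraOrder p n = expLattice p (paraExp n) := rfl

lemma intMat_eq_expLattice_zero : intMat p = expLattice p 0 := by
  simp [intMat, expLattice]

lemma hMat_pow :
    hMat p ^ n = diagonal fun i => (p : ℚ_[p]) ^ (![0, 0, 0, (n : ℤ)] i) := by
  rw [hMat, diagonal_pow]
  congr 1
  funext i
  fin_cases i <;> simp

lemma WMat_mul_self : WMat p n * WMat p n = (p : ℚ_[p]) ^ n • 1 := by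
  ext i j
  fin_cases i <;> fin_cases j <;> simp [WMat, mul_apply, Fin.sum_univ_four, one_apply]

lemma WMat_inv : (WMat p n)⁻¹ = ((p : ℚ_[p]) ^ n)⁻¹ • WMat p n := by
  refine inv_eq_right_inv ?_
  rw [mul_smul_comm, WMat_mul_self, smul_smul,
    inv_mul_cancel₀ (pow_ne_zero n padic_prime_ne_zero), one_smul]

lemma WMat_conj_apply (y : Matrix (Fin 4) (Fin 4) ℚ_[p]) (i j : Fin 4) :
    ((WMat p n)⁻¹ * y * WMat p n) i j =
      (p : ℚ_[p]) ^ (![0, -(n : ℤ), -n, 0] i) *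
        y ((Equiv.swap 0 1 * Equiv.swap 2 3 : Equiv.Perm (Fin 4)) i)
          ((Equiv.swap 0 1 * Equiv.swap 2 3 : Equiv.Perm (Fin 4)) j) *
        (p : ℚ_[p]) ^ (-![0, -(n : ℤ), -n, 0] j) := by
  have hp : (p : ℚ_[p]) ^ n ≠ 0 := pow_ne_zero n padic_prime_ne_zero
  rw [WMat_inv]
  fin_cases i <;> fin_cases j <;>
    simp [WMat, mul_apply, vecMul, dotProduct, Fin.sum_univ_four, Equiv.swap_apply_of_ne_of_ne, hp]

lemma Omax1_eq_expLattice : Omax1 p n = expLattice p (diffExp (alphaExp n 0)) := by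
  rw [Omax1, intMat_eq_expLattice_zero, hMat_pow, image_diagonal_zpow_conj]
  congr 1
  funext i j
  fin_cases i <;> fin_cases j <;> simp [diffExp, alphaExp]

lemma Omax2_eq_expLattice : Omax2 p n = expLattice p (diffExp (alphaExp n n)) := by
  have hconj : Omax2 p n = (fun y => (WMat p n)⁻¹ * y * WMat p n) '' Omax1 p n := by
    rw [Omax1, Set.image_image]; rfl
  rw [hconj, Omax1_eq_expLattice]
  refine (image_expLattice _ _ WMat_conj_apply _).trans ?_
  congr 1
  funext i j
  fin_cases i <;> fin_cases j <;> simp [diffExp, alphaExp, Equiv.swap_apply_of_ne_of_ne]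

lemma paraExp_eq_sup : paraExp n = diffExp (alphaExp n 0) ⊔ diffExp (alphaExp n n) := by
  funext i j
  fin_cases i <;> fin_cases j <;> simp [paraExp, diffExp, alphaExp]

lemma paraOrder_eq_Omax1_inter_Omax2 : paraOrder p n = Omax1 p n ∩ Omax2 p n := by
  rw [Omax1_eq_expLattice, Omax2_eq_expLattice, expLattice_inter, paraOrder_eq_expLattice,
    paraExp_eq_sup]

lemma paraExp_self (i : Fin 4) : paraExp n i i = 0 := by
  fin_cases i <;> simp [paraExp]

lemma exists_alphaExp_of_diffExp_le_paraExp {b : Fin 4 → ℤ} (hb : diffExp b ≤ paraExp n) :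
    ∃ m : ℤ, 0 ≤ m ∧ m ≤ n ∧ diffExp b = diffExp (alphaExp n m) := by
  have h (i j : Fin 4) : b i - b j ≤ paraExp n i j := hb i j
  have h10 := h 1 0; have h01 := h 0 1; have h20 := h 2 0; have h02 := h 0 2
  have h30 := h 3 0; have h03 := h 0 3; have h13 := h 1 3; have h31 := h 3 1
  simp [paraExp] at h10 h01 h20 h02 h30 h03 h13 h31
  refine ⟨b 0 - b 1, by omega, by omega, ?_⟩
  funext i j
  fin_cases i <;> fin_cases j <;> simp [diffExp, alphaExp] <;> omega

lemma IsMaximalOrder.exists_eq_expLattice_alphaExp (hO : IsMaximalOrder p O)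
    (hR : paraOrder p n ⊆ O) : ∃ m : ℤ, 0 ≤ m ∧ m ≤ n ∧
      (O : Set (Matrix (Fin 4) (Fin 4) ℚ_[p])) = expLattice p (diffExp (alphaExp n m)) := by
  have hsingle (i j : Fin 4) : single i j ((p : ℚ_[p]) ^ paraExp n i j) ∈ O :=
    hR (single_zpow_mem_expLattice.2 le_rfl)
  obtain ⟨v, hv⟩ := hO.1.exists_eq_expLattice (fun i => by simpa [paraExp_self] using hsingle i i)
    fun i j => ⟨_, zpow_ne_zero _ padic_prime_ne_zero, hsingle i j⟩
  have hOeq := hO.eq_diffExpSubring hv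
  rw [← hOeq, coe_diffExpSubring] at hR ⊢
  obtain ⟨m, hm0, hmn, hm⟩ :=
    exists_alphaExp_of_diffExp_le_paraExp (expLattice_subset_expLattice_iff.1 hR)
  exact ⟨m, hm0, hmn, by rw [hm]⟩

lemma eq_zero_and_eq_or_of_sup_eq_paraExp {m m' : ℤ}
    (h : diffExp (alphaExp n m) ⊔ diffExp (alphaExp n m') = paraExp n) :
    (m = 0 ∧ m' = n) ∨ (m = n ∧ m' = 0) := by
  have h01 := congr_fun (congr_fun h 0) 1
  have h10 := congr_fun (congr_fun h 1) 0
  simp [diffExp, alphaExp, paraExp] at h01 h10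
  omega

end Paramodular

/-- The paramodular order of level `pⁿ` equals
`hⁿM₄(ℤ_p)h^{−n} ∩ W⁻¹hⁿM₄(ℤ_p)h^{−n}W`, and this is the unique way of writing it as an
intersection of two maximal orders. -/
theorem paramodular_intersection_of_two_maximal_orders :
    paraOrder p n = Omax1 p n ∩ Omax2 p n
    ∧ ∀ O O' : Subring (Matrix (Fin 4) (Fin 4) ℚ_[p]),
        IsMaximalOrder p O → IsMaximalOrder p O' →
        (↑O ∩ ↑O' : Set (Matrix (Fin 4) (Fin 4) ℚ_[p])) = paraOrder p n →
        ({(↑O : Set (Matrix (Fin 4) (Fin 4) ℚ_[p])), ↑O'} :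
            Set (Set (Matrix (Fin 4) (Fin 4) ℚ_[p])))
          = {Omax1 p n, Omax2 p n} := by
  refine ⟨paraOrder_eq_Omax1_inter_Omax2, fun O O' hO hO' hOO' => ?_⟩
  obtain ⟨m, -, -, hm⟩ := hO.exists_eq_expLattice_alphaExp (hOO' ▸ Set.inter_subset_left)
  obtain ⟨m', -, -, hm'⟩ := hO'.exists_eq_expLattice_alphaExp (hOO' ▸ Set.inter_subset_right)
  rw [hm, hm', expLattice_inter, paraOrder_eq_expLattice] at hOO'
  rw [hm, hm', Omax1_eq_expLattice, Omax2_eq_expLattice]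
  rcases eq_zero_and_eq_or_of_sup_eq_paraExp (expLattice_injective hOO') with
    ⟨rfl, rfl⟩ | ⟨rfl, rfl⟩
  · rfl
  · exact Set.pair_comm _ _
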